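/- For x ∈ M let D = (1 + q(x))² + 4(x⁰)², which is strictly positive. Set c = −(1 + q(x) + 2i x⁰)/√D and U′ = D^{−1/2}·[[1−q(x)+2ix³, 2(ix¹+x²)],[2(ix¹−x²), 1−q(x)−2ix³]]. Then |c| = 1, U′ ∈ SU(2) (unitary with determinant 1), and ψ(x) = c·U′. Writing U′ = [[conj(α), β],[−conj(β), α]] with |α|² + |β|² = 1, the vector f = (Im β, Re β, −Im α, −Im c, Re α, Re c) ∈ ℝ⁶ satisfies f = (2/√D) · (x¹, x², x³, x⁰, (1−q(x))/2, −(1+q(x))/2); in particular f is a positive multiple of the standard conformal embedding of x, so the U(2) compactification and the ℝ⁶ null-cone compactification agree. -/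

import Mathlib

noncomputable section

open Matrix Complex

abbrev Mat2 := Matrix (Fin 2) (Fin 2) ℂ

/-- Minkowski quadratic form on ℝ⁴. -/
def mq (x : Fin 4 → ℝ) : ℝ := -(x 0)^2 + (x 1)^2 + (x 2)^2 + (x 3)^2

/-- The isomorphism of Minkowski space with Hermitian 2×2 matrices. -/
def mphi (x : Fin 4 → ℝ) : Mat2 :=
  !![(x 0 : ℂ) + (x 3 : ℂ), (x 1 : ℂ) - Complex.I * (x 2 : ℂ);
     (x 1 : ℂ) + Complex.I * (x 2 : ℂ), (x 0 : ℂ) - (x 3 : ℂ)]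

/-- The Cayley transform. -/
def cayley (X : Mat2) : Mat2 := (X - Complex.I • 1) * (X + Complex.I • 1)⁻¹

/-- ψ = u ∘ φ : M → U(2). -/
def mpsi (x : Fin 4 → ℝ) : Mat2 := cayley (mphi x)

/-- D = (1 + q(x))² + 4(x⁰)². -/
def Dq (x : Fin 4 → ℝ) : ℝ := (1 + mq x)^2 + 4 * (x 0)^2

/-- The U(1) part c of ψ(x). -/
def cPh (x : Fin 4 → ℝ) : ℂ :=
  -((1 : ℂ) + (mq x : ℂ) + 2 * Complex.I * (x 0 : ℂ)) / (Real.sqrt (Dq x) : ℂ)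

/-- The SU(2) part U′ of ψ(x). -/
def Usu (x : Fin 4 → ℝ) : Mat2 :=
  ((Real.sqrt (Dq x) : ℂ))⁻¹ •
    !![1 - (mq x : ℂ) + 2 * Complex.I * (x 3 : ℂ), 2 * (Complex.I * (x 1 : ℂ) + (x 2 : ℂ));
       2 * (Complex.I * (x 1 : ℂ) - (x 2 : ℂ)), 1 - (mq x : ℂ) - 2 * Complex.I * (x 3 : ℂ)]


/-!
The Cayley transform of a 2×2 matrix can be written without inverses as
`(X - i)(X + i)⁻¹ = det(X + i)⁻¹ • (X - i) · adj(X + i)`. For `X = φ(x)` one computes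
`det(X + i) = -(1 + q) + 2i x⁰`, whose modulus is `√D`, and `(X - i) · adj(X + i) = √D • U′`;
since `c · det(X + i) = √D`, this gives `ψ(x) = c • U′`. Positivity of `D` comes from
`D = 1 + q² + 2 ‖x‖²` (Euclidean norm), and `U′ ∈ SU(2)` from
`D = (1 - q)² + 4((x¹)² + (x²)² + (x³)²)`, which says `|α|² + |β|² = 1`, together with the fact
that `[[ᾱ, β], [-β̄, α]]` has determinant `|α|² + |β|²` and `U*U = (|α|² + |β|²) • 1`.
The last claim is read off from the real and imaginary parts of the entries of `U′` and `c`.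
-/

open ComplexConjugate

section QuaternionMatrix

variable {R : Type*} [CommRing R] [StarRing R]

theorem star_mul_quaternionMatrix (a b : R) :
    star !![star a, b; -star b, a] * !![star a, b; -star b, a]
      = (star a * a + star b * b) • (1 : Matrix (Fin 2) (Fin 2) R) := by
  ext i j
  fin_cases i <;> fin_cases j <;> simp [mul_apply, Fin.sum_univ_two] <;> ring

theorem det_quaternionMatrix (a b : R) :
    (!![star a, b; -star b, a]).det = star a * a + star b * b := by
  rw [det_fin_two_of]; ring

theorem quaternionMatrix_mem_unitaryGroup {a b : R} (h : star a * a + star b * b = 1) :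
    !![star a, b; -star b, a] ∈ unitaryGroup (Fin 2) R := by
  rw [mem_unitaryGroup_iff', star_mul_quaternionMatrix, h, one_smul]

end QuaternionMatrix

theorem cayley_eq_inverse_det_smul (X : Mat2) :
    cayley X = Ring.inverse (X + I • 1).det • ((X - I • 1) * (X + I • 1).adjugate) := by
  rw [cayley, Matrix.inv_def, mul_smul_comm]

theorem Dq_eq_one_add (x : Fin 4 → ℝ) :
    Dq x = 1 + mq x ^ 2 + 2 * ((x 0)^2 + (x 1)^2 + (x 2)^2 + (x 3)^2) := by
  simp only [Dq, mq]; ring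

theorem Dq_pos (x : Fin 4 → ℝ) : 0 < Dq x := by
  rw [Dq_eq_one_add]; positivity

theorem sqrt_Dq_pos (x : Fin 4 → ℝ) : 0 < √(Dq x) := Real.sqrt_pos.2 (Dq_pos x)

theorem sq_sqrt_Dq (x : Fin 4 → ℝ) : √(Dq x) ^ 2 = Dq x := Real.sq_sqrt (Dq_pos x).le

section Components

variable (x : Fin 4 → ℝ)

@[simp] theorem cPh_re : (cPh x).re = -(1 + mq x) / √(Dq x) := by
  simp [cPh]

@[simp] theorem cPh_im : (cPh x).im = -(2 * x 0) / √(Dq x) := by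
  simp [cPh]

@[simp] theorem Usu_zero_zero_re : (Usu x 0 0).re = (1 - mq x) / √(Dq x) := by
  simp [Usu, inv_mul_eq_div]

@[simp] theorem Usu_zero_zero_im : (Usu x 0 0).im = 2 * x 3 / √(Dq x) := by
  simp [Usu, inv_mul_eq_div]

@[simp] theorem Usu_zero_one_re : (Usu x 0 1).re = 2 * x 2 / √(Dq x) := by
  simp [Usu, inv_mul_eq_div]

@[simp] theorem Usu_zero_one_im : (Usu x 0 1).im = 2 * x 1 / √(Dq x) := by
  simp [Usu, inv_mul_eq_div]

@[simp] theorem Usu_one_zero_re : (Usu x 1 0).re = -(2 * x 2) / √(Dq x) := by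
  simp [Usu, inv_mul_eq_div]

@[simp] theorem Usu_one_zero_im : (Usu x 1 0).im = 2 * x 1 / √(Dq x) := by
  simp [Usu, inv_mul_eq_div]

@[simp] theorem Usu_one_one_re : (Usu x 1 1).re = (1 - mq x) / √(Dq x) := by
  simp [Usu, inv_mul_eq_div]

@[simp] theorem Usu_one_one_im : (Usu x 1 1).im = -(2 * x 3) / √(Dq x) := by
  simp [Usu, inv_mul_eq_div]

end Components

theorem Usu_zero_zero_eq_conj (x : Fin 4 → ℝ) : Usu x 0 0 = conj (Usu x 1 1) :=
  Complex.ext (by simp) (by simp [neg_div])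

theorem Usu_one_zero_eq_neg_conj (x : Fin 4 → ℝ) : Usu x 1 0 = -conj (Usu x 0 1) :=
  Complex.ext (by simp [neg_div]) (by simp)

theorem Usu_eq_quaternionMatrix (x : Fin 4 → ℝ) :
    Usu x = !![star (Usu x 1 1), Usu x 0 1; -star (Usu x 0 1), Usu x 1 1] := by
  rw [eta_fin_two (Usu x), Usu_zero_zero_eq_conj, Usu_one_zero_eq_neg_conj]
  rfl

theorem norm_cPh (x : Fin 4 → ℝ) : ‖cPh x‖ = 1 := by
  have hs0 := (sqrt_Dq_pos x).ne'
  rw [Complex.norm_def, Real.sqrt_eq_one, Complex.normSq_apply, cPh_re, cPh_im]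
  field_simp
  rw [sq_sqrt_Dq, Dq]
  ring

theorem norm_Usu_one_one_sq_add_norm_Usu_zero_one_sq (x : Fin 4 → ℝ) :
    ‖Usu x 1 1‖ ^ 2 + ‖Usu x 0 1‖ ^ 2 = 1 := by
  have hs0 := (sqrt_Dq_pos x).ne'
  simp only [Complex.sq_norm, Complex.normSq_apply, Usu_one_one_re, Usu_one_one_im,
    Usu_zero_one_re, Usu_zero_one_im]
  field_simp
  rw [sq_sqrt_Dq, Dq, mq]
  ring

theorem det_mphi_add_I (x : Fin 4 → ℝ) : (mphi x + I • 1).det = ⟨-(1 + mq x), 2 * x 0⟩ := by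
  apply Complex.ext <;> simp [det_fin_two, mphi, mq] <;> ring

theorem cPh_mul_det_mphi_add_I (x : Fin 4 → ℝ) :
    cPh x * (mphi x + I • 1).det = √(Dq x) := by
  have hs0 := (sqrt_Dq_pos x).ne'
  apply Complex.ext <;> simp only [det_mphi_add_I, mul_re, mul_im, cPh_re, cPh_im, ofReal_re, ofReal_im]
  · field_simp
    rw [sq_sqrt_Dq, Dq]; ring
  · ring

theorem mphi_sub_I_mul_adjugate (x : Fin 4 → ℝ) :
    (mphi x - I • 1) * (mphi x + I • 1).adjugate = (√(Dq x) : ℂ) • Usu x := by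
  have hs : (√(Dq x) : ℂ) ≠ 0 := by exact_mod_cast (sqrt_Dq_pos x).ne'
  rw [Usu, smul_smul, mul_inv_cancel₀ hs, one_smul, adjugate_fin_two]
  ext i j
  fin_cases i <;> fin_cases j <;> simp [mphi, mq, mul_apply, Fin.sum_univ_two] <;>
    ring_nf <;> simp only [I_sq] <;> ring

theorem mpsi_eq_cPh_smul_Usu (x : Fin 4 → ℝ) : mpsi x = cPh x • Usu x := by
  have hdet := cPh_mul_det_mphi_add_I x
  have hne : (mphi x + I • 1).det ≠ 0 := by
    rintro h
    rw [h, mul_zero, eq_comm, ofReal_eq_zero] at hdet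
    exact (sqrt_Dq_pos x).ne' hdet
  rw [mpsi, cayley_eq_inverse_det_smul, mphi_sub_I_mul_adjugate, smul_smul, Ring.inverse_eq_inv',
    ← hdet, mul_comm (cPh x), inv_mul_cancel_left₀ hne]

theorem stmt19 (x : Fin 4 → ℝ) :
    0 < Dq x ∧
    ‖cPh x‖ = 1 ∧
    Usu x ∈ Matrix.unitaryGroup (Fin 2) ℂ ∧ (Usu x).det = 1 ∧
    mpsi x = cPh x • Usu x ∧
    -- U′ has the form [[conj α, β], [−conj β, α]] with α = U′₁₁, β = U′₀₁
    Usu x 0 0 = (starRingEnd ℂ) (Usu x 1 1) ∧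
    Usu x 1 0 = -(starRingEnd ℂ) (Usu x 0 1) ∧
    ‖Usu x 1 1‖^2 + ‖Usu x 0 1‖^2 = 1 ∧
    -- the vector f = (Im β, Re β, −Im α, −Im c, Re α, Re c) is (2/√D) times the
    -- standard conformal embedding (x¹,x²,x³,x⁰,(1−q)/2,−(1+q)/2)
    (![(Usu x 0 1).im, (Usu x 0 1).re, -(Usu x 1 1).im, -(cPh x).im,
       (Usu x 1 1).re, (cPh x).re] : Fin 6 → ℝ) =
      (2 / Real.sqrt (Dq x)) •
        (![x 1, x 2, x 3, x 0, (1 - mq x)/2, -(1 + mq x)/2] : Fin 6 → ℝ) := by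
  have hnorm := norm_Usu_one_one_sq_add_norm_Usu_zero_one_sq x
  have hunit : star (Usu x 1 1) * Usu x 1 1 + star (Usu x 0 1) * Usu x 0 1 = 1 := by
    simp only [← starRingEnd_apply, conj_mul']
    exact_mod_cast hnorm
  refine ⟨Dq_pos x, norm_cPh x, ?_, ?_, mpsi_eq_cPh_smul_Usu x, Usu_zero_zero_eq_conj x,
    Usu_one_zero_eq_neg_conj x, hnorm, ?_⟩
  · rw [Usu_eq_quaternionMatrix]; exact quaternionMatrix_mem_unitaryGroup hunit
  · rw [Usu_eq_quaternionMatrix, det_quaternionMatrix, hunit]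
  · ext i
    fin_cases i <;> simp <;> ring
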